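/- Suppose V_L is a left disorder operator and set V_R := ΓV_L. Then (P ∨ Q^t) ∩ {V_L}' ∩ {V_R}' = P₊ ∨ Q₊; that is, an element of the von Neumann algebra generated by P and Q^t commutes with both V_L and V_R if and only if it lies in the von Neumann algebra generated by the even parts P₊ and Q₊. -/

import Mathlib

variable {H : Type*} [NormedAddCommGroup H] [InnerProductSpace ℂ H] [CompleteSpace H]

/-- A left disorder operator (for the pair `P`, `Q`): a unitary `V` commuting with `Γ`
that implements `Γ ⬝ Γ` on `P` and the identity on `Q`. -/
def IsLeftDisorder (Γ : H →L[ℂ] H) (P Q : VonNeumannAlgebra H) (V : H →L[ℂ] H) : Prop :=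
  (ContinuousLinearMap.adjoint V * V = 1 ∧ V * ContinuousLinearMap.adjoint V = 1) ∧
  V * Γ = Γ * V ∧
  (∀ A ∈ P, V * A * ContinuousLinearMap.adjoint V = Γ * A * Γ) ∧
  (∀ A ∈ Q, V * A * ContinuousLinearMap.adjoint V = A)

/-- A right disorder operator (for the pair `P`, `Q`): a unitary `V` commuting with `Γ`
that implements the identity on `P` and `Γ ⬝ Γ` on `Q`. -/
def IsRightDisorder (Γ : H →L[ℂ] H) (P Q : VonNeumannAlgebra H) (V : H →L[ℂ] H) : Prop :=
  (ContinuousLinearMap.adjoint V * V = 1 ∧ V * ContinuousLinearMap.adjoint V = 1) ∧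
  V * Γ = Γ * V ∧
  (∀ A ∈ P, V * A * ContinuousLinearMap.adjoint V = A) ∧
  (∀ A ∈ Q, V * A * ContinuousLinearMap.adjoint V = Γ * A * Γ)

/-!
The von Neumann algebra generated by `P` and `Q^t` is the strong closure of the linear span `W` of
the products `a b^t` (`a ∈ P`, `b ∈ Q`): the twisted locality relation
`b^t a = a b₊^t + (Γ a Γ) b₋^t` makes `W` a unital *-algebra, so von Neumann's density theorem
applies. Averaging over conjugation by `V_R`, then by `V_L`, is strongly continuous, fixes every
operator commuting with both, and sends `a b^t` to `a₊ b₊`. Hence an element of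
`(P ∨ Q^t) ∩ {V_L}' ∩ {V_R}'` is a strong limit of elements of the algebra generated by `P₊ ∪ Q₊`,
so it commutes with the commutant of `P₊ ∪ Q₊`. Conversely `Q₊ ⊆ Q^t`, and both disorder operators
commute with `P₊` and `Q₊`.
-/

open ContinuousLinearMap

/-- The strong operator topology is Mathlib's topology of pointwise convergence on `E →Lₚₜ[𝕜] E`;
`toSOT` is the identity map into it. -/
local notation "toSOT" => toPointwiseConvergenceCLM _ (RingHom.id _) _ _

lemma commute_of_conj_eq {M : Type*} [Monoid M] {Γ c : M} (hΓ2 : Γ * Γ = 1)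
    (h : Γ * c * Γ = c) : Commute Γ c :=
  calc Γ * c = Γ * c * Γ * Γ := by rw [mul_assoc (Γ * c), hΓ2, mul_one]
    _ = c * Γ := by rw [h]

lemma conj_mul_of_mem_unitary {M : Type*} [Monoid M] [StarMul M] {V : M} (hV : V ∈ unitary M)
    (a b : M) : V * (a * b) * star V = V * a * star V * (V * b * star V) := by
  simp only [mul_assoc, Unitary.star_mul_self_of_mem hV, ← mul_assoc (star V) V, one_mul]

section Twist

variable {A : Type*} [Ring A] [Algebra ℂ A] {Γ : A}

/-- The paper's `Z`, so that `b^t = twist Γ * b * star (twist Γ)`. -/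
noncomputable def twist (Γ : A) : A := ((1 - Complex.I) / 2) • 1 + ((1 + Complex.I) / 2) • Γ

noncomputable def evenPart (Γ a : A) : A := (2⁻¹ : ℂ) • (a + Γ * a * Γ)

noncomputable def oddPart (Γ a : A) : A := (2⁻¹ : ℂ) • (a - Γ * a * Γ)

lemma Commute.twist_left {c : A} (h : Commute Γ c) : Commute (twist Γ) c :=
  ((Commute.one_left c).smul_left _).add_left (h.smul_left _)

lemma evenPart_add_oddPart (Γ a : A) : evenPart Γ a + oddPart Γ a = a := by
  simp only [evenPart, oddPart]; module

lemma commute_evenPart (hΓ2 : Γ * Γ = 1) (a : A) : Commute Γ (evenPart Γ a) := by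
  simp only [Commute, SemiconjBy, evenPart, mul_smul_comm, smul_mul_assoc, mul_add, add_mul,
    ← mul_assoc, hΓ2, one_mul]
  simp only [mul_assoc, hΓ2, mul_one, add_comm]

lemma anticommute_oddPart (hΓ2 : Γ * Γ = 1) (a : A) :
    Γ * oddPart Γ a = -(oddPart Γ a * Γ) := by
  simp only [oddPart, mul_smul_comm, smul_mul_assoc, mul_sub, sub_mul, ← mul_assoc, hΓ2, one_mul]
  simp only [mul_assoc, hΓ2, mul_one, ← smul_neg, neg_sub]

lemma conj_evenPart (hΓ2 : Γ * Γ = 1) (a : A) : Γ * evenPart Γ a * Γ = evenPart Γ a := by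
  rw [(commute_evenPart hΓ2 a).eq, mul_assoc, hΓ2, mul_one]

section Membership

variable {S : Type*} [SetLike S A] [AddSubgroupClass S A] [SMulMemClass S ℂ A] {s : S} {a : A}

lemma evenPart_mem (hs : ∀ c ∈ s, Γ * c * Γ ∈ s) (ha : a ∈ s) : evenPart Γ a ∈ s :=
  SMulMemClass.smul_mem _ (add_mem ha (hs a ha))

lemma oddPart_mem (hs : ∀ c ∈ s, Γ * c * Γ ∈ s) (ha : a ∈ s) : oddPart Γ a ∈ s :=
  SMulMemClass.smul_mem _ (sub_mem ha (hs a ha))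

end Membership

variable [StarRing A] [StarModule ℂ A]

lemma star_twist (hΓ : IsSelfAdjoint Γ) :
    star (twist Γ) = ((1 + Complex.I) / 2) • 1 + ((1 - Complex.I) / 2) • Γ := by
  have h₁ : star ((1 - Complex.I) / 2) = (1 + Complex.I) / 2 := by simp
  have h₂ : star ((1 + Complex.I) / 2) = (1 - Complex.I) / 2 := by simp [sub_eq_add_neg]
  simp only [twist, star_add, star_smul, star_one, hΓ.star_eq, h₁, h₂]

lemma twist_mem_unitary (hΓ : IsSelfAdjoint Γ) (hΓ2 : Γ * Γ = 1) : twist Γ ∈ unitary A := by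
  rw [Unitary.mem_iff, star_twist hΓ, twist]
  constructor <;>
  · simp only [add_mul, mul_add, smul_mul_assoc, mul_smul_comm, one_mul, mul_one, hΓ2]
    match_scalars
    · linear_combination (-1 / 2 : ℂ) * Complex.I_sq
    · linear_combination (1 / 2 : ℂ) * Complex.I_sq

lemma twist_conj_of_commute (hΓ : IsSelfAdjoint Γ) (hΓ2 : Γ * Γ = 1) {c : A} (h : Commute Γ c) :
    twist Γ * c * star (twist Γ) = c :=
  (commute_unitary_iff_star_right_conjugate (twist_mem_unitary hΓ hΓ2)).1 h.twist_left

lemma twist_conj_of_anticommute (hΓ : IsSelfAdjoint Γ) (hΓ2 : Γ * Γ = 1) {c : A}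
    (h : Γ * c = -(c * Γ)) : twist Γ * c * star (twist Γ) = (-Complex.I) • (c * Γ) := by
  have hZc : twist Γ * c = c * (((1 - Complex.I) / 2) • 1 - ((1 + Complex.I) / 2) • Γ) := by
    simp only [twist, add_mul, mul_sub, smul_mul_assoc, mul_smul_comm, one_mul, mul_one, h,
      smul_neg]
    abel
  rw [hZc, star_twist hΓ, mul_assoc, ← mul_smul_comm]
  congr 1
  simp only [sub_mul, mul_add, smul_mul_assoc, mul_smul_comm, one_mul, mul_one, hΓ2]
  match_scalars <;> ring

lemma twist_conj_mul_eq (hΓ : IsSelfAdjoint Γ) (hΓ2 : Γ * Γ = 1) {a b : A}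
    (hEven : Commute a (evenPart Γ b)) (hOdd : Commute a (oddPart Γ b)) :
    twist Γ * b * star (twist Γ) * a =
      a * (twist Γ * evenPart Γ b * star (twist Γ)) +
        Γ * a * Γ * (twist Γ * oddPart Γ b * star (twist Γ)) := by
  set o := oddPart Γ b
  have hoΓ : o * Γ = -(Γ * o) := by rw [anticommute_oddPart hΓ2, neg_neg]
  have key : Γ * a * Γ * (o * Γ) = o * Γ * a := by
    calc Γ * a * Γ * (o * Γ) = -(Γ * a * (Γ * Γ) * o) := by
          rw [hoΓ]; simp only [mul_neg, mul_assoc]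
      _ = -(Γ * o) * a := by rw [hΓ2, mul_one, mul_assoc, hOdd.eq, neg_mul, mul_assoc]
      _ = o * Γ * a := by rw [hoΓ]
  have hZe : twist Γ * evenPart Γ b * star (twist Γ) = evenPart Γ b :=
    twist_conj_of_commute hΓ hΓ2 (commute_evenPart hΓ2 b)
  have hZo : twist Γ * o * star (twist Γ) = (-Complex.I) • (o * Γ) :=
    twist_conj_of_anticommute hΓ hΓ2 (anticommute_oddPart hΓ2 b)
  conv_lhs => rw [← evenPart_add_oddPart Γ b]
  rw [mul_add, add_mul, add_mul, hZe, hZo, smul_mul_assoc, mul_smul_comm, key, hEven.eq]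

lemma twist_conj_mul_mem_mul {P Q : StarSubalgebra ℂ A} {T : Submodule ℂ A}
    (hΓ : IsSelfAdjoint Γ) (hΓ2 : Γ * Γ = 1) (hPΓ : ∀ a ∈ P, Γ * a * Γ ∈ P)
    (hQΓ : ∀ b ∈ Q, Γ * b * Γ ∈ Q) (hPQ : (P : Set A) ⊆ Set.centralizer Q)
    (hT : ∀ b ∈ Q, twist Γ * b * star (twist Γ) ∈ T) {a b : A} (ha : a ∈ P) (hb : b ∈ Q) :
    twist Γ * b * star (twist Γ) * a ∈ P.toSubalgebra.toSubmodule * T := by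
  rw [twist_conj_mul_eq hΓ hΓ2 (hPQ ha _ (evenPart_mem hQΓ hb)).symm
    (hPQ ha _ (oddPart_mem hQΓ hb)).symm]
  exact add_mem (Submodule.mul_mem_mul ha (hT _ (evenPart_mem hQΓ hb)))
    (Submodule.mul_mem_mul (hPΓ a ha) (hT _ (oddPart_mem hQΓ hb)))

end Twist

section ConjAvg

variable {A : Type*} [Ring A] [StarRing A] [Algebra ℂ A] {V Γ a b : A}

noncomputable def conjAvg (V a : A) : A := (2⁻¹ : ℂ) • (a + V * a * star V)

lemma conjAvg_add (V a b : A) : conjAvg V (a + b) = conjAvg V a + conjAvg V b := by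
  simp only [conjAvg, mul_add, add_mul]; module

lemma conjAvg_of_commute (hV : V ∈ unitary A) (h : Commute V a) : conjAvg V a = a := by
  rw [conjAvg, (commute_unitary_iff_star_right_conjugate hV).1 h]; module

lemma conjAvg_eq_evenPart (h : V * a * star V = Γ * a * Γ) : conjAvg V a = evenPart Γ a := by
  rw [conjAvg, h, evenPart]

lemma conjAvg_mul_of_conj_eq_left (hV : V ∈ unitary A) (ha : V * a * star V = a) :
    conjAvg V (a * b) = a * conjAvg V b := by
  rw [conjAvg, conj_mul_of_mem_unitary hV, ha, ← mul_add, ← mul_smul_comm, conjAvg]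

lemma conjAvg_mul_of_conj_eq_right (hV : V ∈ unitary A) (hb : V * b * star V = b) :
    conjAvg V (a * b) = conjAvg V a * b := by
  rw [conjAvg, conj_mul_of_mem_unitary hV, hb, ← add_mul, ← smul_mul_assoc, conjAvg]

lemma conjAvg_twist_conj (hVΓ : Commute V Γ) (b : A) :
    conjAvg V (twist Γ * b * star (twist Γ)) = twist Γ * conjAvg V b * star (twist Γ) := by
  have h₁ : Commute V (twist Γ) := (hVΓ.symm.twist_left).symm
  have h₂ : Commute (star V) (star (twist Γ)) := h₁.star_star
  simp only [conjAvg, mul_smul_comm, smul_mul_assoc, mul_add, add_mul, ← mul_assoc, h₁.eq]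
  simp only [mul_assoc, h₂.eq]

end ConjAvg

section ProductStarSubalgebra

variable {R A : Type*} [CommSemiring R] [StarRing R] [Semiring A] [StarRing A] [Algebra R A]
  [StarModule R A]

open Submodule in
def StarSubalgebra.mulOfExchange (P S : StarSubalgebra R A)
    (h : ∀ s ∈ S, ∀ p ∈ P, s * p ∈ P.toSubalgebra.toSubmodule * S.toSubalgebra.toSubmodule) :
    StarSubalgebra R A where
  toSubalgebra := (P.toSubalgebra.toSubmodule * S.toSubalgebra.toSubmodule).toSubalgebra
    (by simpa using mul_mem_mul (M := P.toSubalgebra.toSubmodule) (one_mem P) (one_mem S))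
    (by
      set P' := P.toSubalgebra.toSubmodule
      set S' := S.toSubalgebra.toSubmodule
      have hP : P' * P' ≤ P' := mul_le.2 fun a ha b hb => P.mul_mem ha hb
      have hS : S' * S' ≤ S' := mul_le.2 fun a ha b hb => S.mul_mem ha hb
      have hSP : S' * P' ≤ P' * S' := mul_le.2 h
      have : P' * S' * (P' * S') ≤ P' * S' :=
        calc P' * S' * (P' * S') = P' * (S' * P') * S' := by simp only [mul_assoc]
          _ ≤ P' * (P' * S') * S' := by gcongr
          _ = P' * P' * (S' * S') := by simp only [mul_assoc]
          _ ≤ P' * S' := by gcongr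
      exact fun x y hx hy => this (mul_mem_mul hx hy))
  star_mem' {x} hx := by
    refine Submodule.mul_induction_on hx (fun p hp s hs => ?_) fun x y hx hy => ?_
    · rw [star_mul]
      exact h _ (star_mem (s := S) hs) _ (star_mem (s := P) hp)
    · rw [star_add]
      exact add_mem (S := Submodule R A) hx hy

end ProductStarSubalgebra

section Density

variable (𝕜 E : Type*) [RCLike 𝕜] [NormedAddCommGroup E] [InnerProductSpace 𝕜 E] [CompleteSpace E]
  (ι : Type*) [Fintype ι]

noncomputable def ampliation :
    (E →L[𝕜] E) →⋆ₐ[𝕜] (PiLp 2 (fun _ : ι => E) →L[𝕜] PiLp 2 (fun _ : ι => E)) where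
  toFun T := (PiLp.continuousLinearEquiv 2 𝕜 _).symm.toContinuousLinearMap ∘L
    (piMap fun _ => T) ∘L (PiLp.continuousLinearEquiv 2 𝕜 _).toContinuousLinearMap
  map_one' := rfl
  map_mul' _ _ := rfl
  map_zero' := rfl
  map_add' _ _ := rfl
  commutes' _ := rfl
  map_star' T := (eq_adjoint_iff _ _).2 fun v w => by
    simp only [PiLp.inner_apply]
    exact Finset.sum_congr rfl fun i _ => adjoint_inner_left T (w i) (v i)

variable {𝕜 E ι}

/-- An operator on `⨁ᵢ E` commuting with the ampliation of `S` has matrix entries in `S'`. -/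
lemma ampliation_mem_centralizer_centralizer {S : Set (E →L[𝕜] E)} {x : E →L[𝕜] E}
    (hx : x ∈ Set.centralizer (Set.centralizer S)) :
    ampliation 𝕜 E ι x ∈ Set.centralizer (Set.centralizer (ampliation 𝕜 E ι '' S)) := by
  classical
  intro T hT
  let inj (j : ι) : E →L[𝕜] PiLp 2 (fun _ : ι => E) :=
    (PiLp.continuousLinearEquiv 2 𝕜 _).symm.toContinuousLinearMap ∘L single 𝕜 (fun _ => E) j
  let entry (i j : ι) : E →L[𝕜] E := PiLp.proj 2 (fun _ : ι => E) i ∘L T ∘L inj j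
  have ampliation_inj (w : E →L[𝕜] E) (j : ι) :
      ampliation 𝕜 E ι w ∘L inj j = inj j ∘L w := by
    ext h i
    exact Pi.apply_single (fun _ => w) (fun _ => map_zero w) j h i
  have entry_mem (i j : ι) : entry i j ∈ Set.centralizer S := fun w hw =>
    calc w * entry i j
        = PiLp.proj 2 (fun _ : ι => E) i ∘L (ampliation 𝕜 E ι w * T) ∘L inj j := rfl
      _ = PiLp.proj 2 (fun _ : ι => E) i ∘L T ∘L (ampliation 𝕜 E ι w ∘L inj j) := by
        rw [hT _ ⟨w, hw, rfl⟩]; rfl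
      _ = entry i j * w := by rw [ampliation_inj]; rfl
  have expand (u : PiLp 2 (fun _ : ι => E)) (i : ι) : T u i = ∑ j, entry i j (u j) := by
    have hu : u = ∑ j, inj j (u j) := by ext i; simp [inj]
    conv_lhs => rw [hu]
    simp only [map_sum, WithLp.ofLp_sum, Finset.sum_apply]
    rfl
  ext v i
  calc T (ampliation 𝕜 E ι x v) i = ∑ j, entry i j (x (v j)) := expand _ i
    _ = ∑ j, x (entry i j (v j)) := Finset.sum_congr rfl fun j _ =>
          congr($(hx (entry i j) (entry_mem i j)) (v j))
    _ = x (T v i) := by rw [expand, map_sum]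

lemma Submodule.commute_starProjection (K : Submodule 𝕜 E) [K.HasOrthogonalProjection]
    {T : E →L[𝕜] E} (h : K ∈ Module.End.invtSubmodule T)
    (h' : K ∈ Module.End.invtSubmodule (adjoint T)) : Commute K.starProjection T :=
  K.isIdempotentElem_starProjection.commute_iff.2
    ⟨by rwa [range_starProjection],
      by rw [ker_starProjection]; exact orthogonal_mem_invtSubmodule h'⟩

/-- The projection onto the closure of `S v` commutes with `S`, hence with `x`, and fixes `v`. -/
lemma apply_mem_closure_of_mem_centralizer_centralizer (S : StarSubalgebra 𝕜 (E →L[𝕜] E))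
    {x : E →L[𝕜] E} (hx : x ∈ Set.centralizer (Set.centralizer (S : Set (E →L[𝕜] E)))) (v : E) :
    x v ∈ closure ((fun w : E →L[𝕜] E => w v) '' S) := by
  set K₀ : Submodule 𝕜 E := S.toSubalgebra.toSubmodule.map (apply 𝕜 E v : (E →L[𝕜] E) →ₗ[𝕜] E)
  have hK₀ : (K₀ : Set E) = (fun w : E →L[𝕜] E => w v) '' S := Submodule.map_coe _ _
  set K := K₀.topologicalClosure
  have hK : (K : Set E) = closure K₀ := K₀.topologicalClosure_coe
  have : CompleteSpace K := K₀.isClosed_topologicalClosure.completeSpace_coe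
  have invt {w : E →L[𝕜] E} (hw : w ∈ S) : K ∈ Module.End.invtSubmodule w := by
    refine (Module.End.mem_invtSubmodule_iff_forall_mem_of_mem _).2 fun y hy => ?_
    rw [← SetLike.mem_coe, hK] at hy ⊢
    refine map_mem_closure w.continuous hy ?_
    rw [hK₀]
    rintro _ ⟨u, hu, rfl⟩
    exact ⟨w * u, S.mul_mem hw hu, rfl⟩
  have hv : v ∈ K :=
    K₀.le_topologicalClosure (show v ∈ (K₀ : Set E) by rw [hK₀]; exact ⟨1, S.one_mem, rfl⟩)
  have hcomm : K.starProjection ∈ Set.centralizer (S : Set (E →L[𝕜] E)) := fun w hw =>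
    (K.commute_starProjection (invt hw) (invt (star_mem hw))).eq.symm
  have hxv : x v = K.starProjection (x v) :=
    calc x v = x (K.starProjection v) := by rw [K.starProjection_eq_self_iff.2 hv]
      _ = K.starProjection (x v) := congr($(hx _ hcomm) v).symm
  rw [← hK₀, ← hK, hxv]
  exact K.starProjection_apply_mem _

/-- Von Neumann's density theorem. A finite set `s` of vectors is handled by the single-vector
case for the ampliation of `S` to `⨁_{ξ ∈ s} E`. -/
theorem mem_closure_of_mem_centralizer_centralizer (S : StarSubalgebra 𝕜 (E →L[𝕜] E))
    {x : E →L[𝕜] E} (hx : x ∈ Set.centralizer (Set.centralizer (S : Set (E →L[𝕜] E)))) :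
    toSOT x ∈ closure (toSOT '' S) := by
  rw [mem_closure_iff_nhds_basis
    ((PointwiseConvergenceCLM.hasBasis_nhds_zero_of_basis Metric.nhds_basis_ball).nhds_of_zero _)]
  rintro ⟨s, ε⟩ ⟨hs, hε⟩
  have : Fintype s := Fintype.ofFinite s
  let v : PiLp 2 (fun _ : s => E) := WithLp.toLp 2 (fun ξ => (ξ : E))
  have hamp := ampliation_mem_centralizer_centralizer (ι := s) hx
  rw [← StarSubalgebra.coe_map] at hamp
  obtain ⟨_, ⟨_, ⟨w, hw, rfl⟩, rfl⟩, hdist⟩ :=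
    Metric.mem_closure_iff.1 (apply_mem_closure_of_mem_centralizer_centralizer _ hamp v) ε hε
  refine ⟨_, ⟨w, hw, rfl⟩, fun ξ hξ => ?_⟩
  rw [mem_ball_zero_iff]
  calc ‖w ξ - x ξ‖ = ‖(ampliation 𝕜 E s w v - ampliation 𝕜 E s x v) ⟨ξ, hξ⟩‖ := rfl
    _ ≤ ‖ampliation 𝕜 E s w v - ampliation 𝕜 E s x v‖ := PiLp.norm_apply_le _ _
    _ < ε := by rw [← dist_eq_norm, dist_comm]; exact hdist

end Density

section StrongClosure

variable {𝕜 E : Type*} [RCLike 𝕜] [NormedAddCommGroup E] [InnerProductSpace 𝕜 E]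

lemma commute_of_mem_closure {x Y : E →L[𝕜] E} {U : Set (E →L[𝕜] E)}
    (hx : toSOT x ∈ closure (toSOT '' U)) (hU : ∀ u ∈ U, Commute Y u) : Commute Y x := by
  have hC : IsClosed {T : E →Lₚₜ[𝕜] E | ∀ v, Y (T v) = T (Y v)} := by
    simp only [Set.ofPred_forall]
    exact isClosed_iInter fun v =>
      isClosed_eq (Y.continuous.comp (continuous_eval_const v)) (continuous_eval_const _)
  have hxC := closure_minimal (by rintro _ ⟨u, hu, rfl⟩ v; exact congr($(hU u hu) v)) hC hx
  ext v
  exact hxC v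

lemma mem_closure_image_conjAvg {V x : H →L[ℂ] H} {U : Set (H →L[ℂ] H)}
    (hV : V ∈ unitary (H →L[ℂ] H)) (hxV : Commute V x)
    (hx : toSOT x ∈ closure (toSOT '' U)) : toSOT x ∈ closure (toSOT '' (conjAvg V '' U)) := by
  let f : (H →Lₚₜ[ℂ] H) →L[ℂ] H →Lₚₜ[ℂ] H := (2⁻¹ : ℂ) •
    (ContinuousLinearMap.id ℂ _ + (PointwiseConvergenceCLM.postcomp H V).comp
      (PointwiseConvergenceCLM.precomp H (star V)))
  have hf (T : H →L[ℂ] H) : f (toSOT T) = toSOT (conjAvg V T) := rfl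
  have hfx : f (toSOT x) ∈ closure (toSOT '' (conjAvg V '' U)) :=
    map_mem_closure f.continuous hx <| by
      rintro _ ⟨T, hT, rfl⟩
      exact ⟨conjAvg V T, ⟨T, hT, rfl⟩, (hf T).symm⟩
  rwa [hf, conjAvg_of_commute hV hxV] at hfx

theorem commute_of_commute_conjAvg_conjAvg (S : StarSubalgebra ℂ (H →L[ℂ] H))
    {U V x Y : H →L[ℂ] H} (hU : U ∈ unitary (H →L[ℂ] H)) (hV : V ∈ unitary (H →L[ℂ] H))
    (hx : x ∈ Set.centralizer (Set.centralizer (S : Set (H →L[ℂ] H))))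
    (hUx : Commute U x) (hVx : Commute V x)
    (hY : ∀ w ∈ S, Commute Y (conjAvg U (conjAvg V w))) : Commute Y x := by
  refine commute_of_mem_closure (mem_closure_image_conjAvg hU hUx
    (mem_closure_image_conjAvg hV hVx (mem_closure_of_mem_centralizer_centralizer S hx))) ?_
  rintro _ ⟨_, ⟨w, hw, rfl⟩, rfl⟩
  exact hY w hw

end StrongClosure

section Disorder

variable {Γ V : H →L[ℂ] H} {P Q : VonNeumannAlgebra H} {a b : H →L[ℂ] H}

lemma IsLeftDisorder.mem_unitary (hV : IsLeftDisorder Γ P Q V) : V ∈ unitary (H →L[ℂ] H) :=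
  Unitary.mem_iff.2 hV.1

lemma IsRightDisorder.mem_unitary (hV : IsRightDisorder Γ P Q V) : V ∈ unitary (H →L[ℂ] H) :=
  Unitary.mem_iff.2 hV.1

lemma IsLeftDisorder.isRightDisorder_mul (hΓ : IsSelfAdjoint Γ) (hΓ2 : Γ * Γ = 1)
    (hV : IsLeftDisorder Γ P Q V) : IsRightDisorder Γ P Q (Γ * V) := by
  have hΓu : Γ ∈ unitary (H →L[ℂ] H) := by rw [Unitary.mem_iff, hΓ.star_eq, hΓ2]; simp
  have hconj (c : H →L[ℂ] H) : Γ * V * c * adjoint (Γ * V) = Γ * (V * c * adjoint V) * Γ := by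
    rw [← star_eq_adjoint, star_mul, hΓ.star_eq]
    simp only [mul_assoc, star_eq_adjoint]
  refine ⟨Unitary.mem_iff.1 (mul_mem hΓu hV.mem_unitary), ?_, fun c hc => ?_, fun c hc => ?_⟩
  · rw [mul_assoc, hV.2.1, ← mul_assoc]
  · rw [hconj, hV.2.2.1 c hc, ← mul_assoc, ← mul_assoc, hΓ2, one_mul, mul_assoc, hΓ2, mul_one]
  · rw [hconj, hV.2.2.2 c hc]

lemma IsLeftDisorder.conjAvg_mul (hV : IsLeftDisorder Γ P Q V) (ha : a ∈ P) (hb : b ∈ Q) :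
    conjAvg V (a * b) = evenPart Γ a * b := by
  rw [conjAvg_mul_of_conj_eq_right hV.mem_unitary (hV.2.2.2 b hb),
    conjAvg_eq_evenPart (hV.2.2.1 a ha)]

lemma IsRightDisorder.conjAvg_mul_twist_conj (hΓ : IsSelfAdjoint Γ) (hΓ2 : Γ * Γ = 1)
    (hV : IsRightDisorder Γ P Q V) (ha : a ∈ P) (hb : b ∈ Q) :
    conjAvg V (a * (twist Γ * b * star (twist Γ))) = a * evenPart Γ b := by
  rw [conjAvg_mul_of_conj_eq_left hV.mem_unitary (hV.2.2.1 a ha), conjAvg_twist_conj hV.2.1,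
    conjAvg_eq_evenPart (hV.2.2.2 b hb),
    twist_conj_of_commute hΓ hΓ2 (commute_evenPart hΓ2 b)]

lemma IsLeftDisorder.conjAvg_conjAvg_mul_twist_conj (hΓ : IsSelfAdjoint Γ) (hΓ2 : Γ * Γ = 1)
    (hQΓ : ∀ b ∈ Q, Γ * b * Γ ∈ Q) (hV : IsLeftDisorder Γ P Q V) (ha : a ∈ P) (hb : b ∈ Q) :
    conjAvg V (conjAvg (Γ * V) (a * (twist Γ * b * star (twist Γ)))) =
      evenPart Γ a * evenPart Γ b := by
  rw [(hV.isRightDisorder_mul hΓ hΓ2).conjAvg_mul_twist_conj hΓ hΓ2 ha hb,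
    hV.conjAvg_mul ha (evenPart_mem (s := Q.toStarSubalgebra) hQΓ hb)]

lemma IsLeftDisorder.mem_centralizer (hV : IsLeftDisorder Γ P Q V) :
    V ∈ Set.centralizer ({a | a ∈ P ∧ Γ * a * Γ = a} ∪ {b | b ∈ Q ∧ Γ * b * Γ = b}) := by
  rintro c (⟨hc, hcΓ⟩ | ⟨hc, -⟩) <;>
    refine ((commute_unitary_iff_star_right_conjugate hV.mem_unitary).2 ?_).eq.symm
  · exact (hV.2.2.1 c hc).trans hcΓ
  · exact hV.2.2.2 c hc

lemma IsRightDisorder.mem_centralizer (hV : IsRightDisorder Γ P Q V) :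
    V ∈ Set.centralizer ({a | a ∈ P ∧ Γ * a * Γ = a} ∪ {b | b ∈ Q ∧ Γ * b * Γ = b}) := by
  rintro c (⟨hc, -⟩ | ⟨hc, hcΓ⟩) <;>
    refine ((commute_unitary_iff_star_right_conjugate hV.mem_unitary).2 ?_).eq.symm
  · exact hV.2.2.1 c hc
  · exact (hV.2.2.2 c hc).trans hcΓ

theorem IsLeftDisorder.commute_of_mem_centralizer_centralizer (hΓ : IsSelfAdjoint Γ)
    (hΓ2 : Γ * Γ = 1) (hPΓ : ∀ a ∈ P, Γ * a * Γ ∈ P) (hQΓ : ∀ b ∈ Q, Γ * b * Γ ∈ Q)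
    (hPQ : (P : Set (H →L[ℂ] H)) ⊆ Set.centralizer (Q : Set (H →L[ℂ] H)))
    (hV : IsLeftDisorder Γ P Q V) {x Y : H →L[ℂ] H}
    (hx : x ∈ Set.centralizer (Set.centralizer
      ((P : Set (H →L[ℂ] H)) ∪ (fun b => twist Γ * b * star (twist Γ)) '' Q)))
    (hVx : Commute V x) (hΓVx : Commute (Γ * V) x)
    (hY : Y ∈ Set.centralizer ({a | a ∈ P ∧ Γ * a * Γ = a} ∪ {b | b ∈ Q ∧ Γ * b * Γ = b})) :
    Commute Y x := by
  set Qt : StarSubalgebra ℂ (H →L[ℂ] H) :=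
    Q.toStarSubalgebra.map (Unitary.conjStarAlgAut ℂ _ ⟨twist Γ, twist_mem_unitary hΓ hΓ2⟩)
  have hQt : (Qt : Set (H →L[ℂ] H)) = (fun b => twist Γ * b * star (twist Γ)) '' Q :=
    StarSubalgebra.coe_map _ _
  have mem_Qt {t : H →L[ℂ] H} (ht : t ∈ Qt) : ∃ b ∈ Q, twist Γ * b * star (twist Γ) = t := by
    rwa [← SetLike.mem_coe, hQt] at ht
  set W := StarSubalgebra.mulOfExchange P.toStarSubalgebra Qt fun t ht a ha => by
    obtain ⟨b, hb, rfl⟩ := mem_Qt ht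
    exact twist_conj_mul_mem_mul (P := P.toStarSubalgebra) (Q := Q.toStarSubalgebra) hΓ hΓ2 hPΓ hQΓ
      hPQ (fun b hb => StarSubalgebra.mem_map.2 ⟨b, hb, rfl⟩) ha hb
  have hgen : (P : Set (H →L[ℂ] H)) ∪ Qt ⊆ W := by
    rintro c (hc | hc)
    · exact mul_one c ▸ Submodule.mul_mem_mul (N := Qt.toSubalgebra.toSubmodule) hc (one_mem Qt)
    · exact one_mul c ▸ Submodule.mul_mem_mul (M := P.toSubalgebra.toSubmodule) (one_mem P) hc
  rw [← hQt] at hx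
  refine commute_of_commute_conjAvg_conjAvg W hV.mem_unitary
    (hV.isRightDisorder_mul hΓ hΓ2).mem_unitary
    (Set.centralizer_subset (Set.centralizer_subset hgen) hx) hVx hΓVx fun w hw => ?_
  refine Submodule.mul_induction_on hw (fun a ha t ht => ?_) fun u v hu hv => ?_
  · obtain ⟨b, hb, rfl⟩ := mem_Qt ht
    rw [hV.conjAvg_conjAvg_mul_twist_conj hΓ hΓ2 hQΓ ha hb]
    exact Commute.mul_right
      (hY _ (Or.inl ⟨evenPart_mem (s := P.toStarSubalgebra) hPΓ ha, conj_evenPart hΓ2 a⟩)).symm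
      (hY _ (Or.inr ⟨evenPart_mem (s := Q.toStarSubalgebra) hQΓ hb, conj_evenPart hΓ2 b⟩)).symm
  · rw [conjAvg_add, conjAvg_add]
    exact hu.add_right hv

theorem IsLeftDisorder.centralizer_centralizer_even_subset (hΓ : IsSelfAdjoint Γ)
    (hΓ2 : Γ * Γ = 1) (hV : IsLeftDisorder Γ P Q V) :
    Set.centralizer (Set.centralizer
        ({a | a ∈ P ∧ Γ * a * Γ = a} ∪ {b | b ∈ Q ∧ Γ * b * Γ = b})) ⊆
      Set.centralizer (Set.centralizer
        ((P : Set (H →L[ℂ] H)) ∪ (fun b => twist Γ * b * star (twist Γ)) '' Q)) ∩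
        Set.centralizer {V} ∩ Set.centralizer {Γ * V} := by
  have hsub : {a | a ∈ P ∧ Γ * a * Γ = a} ∪ {b | b ∈ Q ∧ Γ * b * Γ = b} ⊆
      (P : Set (H →L[ℂ] H)) ∪ (fun b => twist Γ * b * star (twist Γ)) '' Q := by
    rintro c (⟨hc, -⟩ | ⟨hc, hcΓ⟩)
    · exact Or.inl hc
    · exact Or.inr ⟨c, hc, twist_conj_of_commute hΓ hΓ2 (commute_of_conj_eq hΓ2 hcΓ)⟩
  intro x hx
  refine ⟨⟨Set.centralizer_subset (Set.centralizer_subset hsub) hx, ?_⟩, ?_⟩ <;> rintro _ rfl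
  exacts [hx _ hV.mem_centralizer, hx _ (hV.isRightDisorder_mul hΓ hΓ2).mem_centralizer]

end Disorder

/-- Suppose `V_L` is a left disorder operator and `V_R := ΓV_L`. Then
`(P ∨ Q^t) ∩ {V_L}' ∩ {V_R}' = P₊ ∨ Q₊`: an element of the von Neumann algebra generated by
`P` and `Q^t` commutes with both `V_L` and `V_R` iff it lies in the von Neumann algebra
generated by the even parts `P₊` and `Q₊`. -/
theorem fixed_points_of_disorder_conjugation
    (Γ : H →L[ℂ] H) (hΓsa : ContinuousLinearMap.adjoint Γ = Γ) (hΓ2 : Γ * Γ = 1)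
    (Z : H →L[ℂ] H)
    (hZ : Z = ((1 - Complex.I) / 2) • (1 : H →L[ℂ] H) + ((1 + Complex.I) / 2) • Γ)
    (P Q : VonNeumannAlgebra H)
    (hPΓ : ∀ A ∈ P, Γ * A * Γ ∈ P) (hQΓ : ∀ A ∈ Q, Γ * A * Γ ∈ Q)
    (hPQ : (P : Set (H →L[ℂ] H)) ⊆ Set.centralizer (Q : Set (H →L[ℂ] H)))
    (VL VR : H →L[ℂ] H) (hVL : IsLeftDisorder Γ P Q VL) (hVR : VR = Γ * VL)
    -- the twisted algebra Q^t and the even parts P₊, Q₊ (as sets)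
    (Qt Pplus Qplus : Set (H →L[ℂ] H))
    (hQt : Qt = (fun B => Z * B * ContinuousLinearMap.adjoint Z) '' (Q : Set (H →L[ℂ] H)))
    (hPplus : Pplus = {A : H →L[ℂ] H | A ∈ P ∧ Γ * A * Γ = A})
    (hQplus : Qplus = {A : H →L[ℂ] H | A ∈ Q ∧ Γ * A * Γ = A}) :
    Set.centralizer (Set.centralizer ((P : Set (H →L[ℂ] H)) ∪ Qt))
        ∩ Set.centralizer {VL} ∩ Set.centralizer {VR}
      = Set.centralizer (Set.centralizer (Pplus ∪ Qplus)) := by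
  have hΓ : IsSelfAdjoint Γ := hΓsa
  obtain rfl : Z = twist Γ := hZ
  subst hQt hPplus hQplus hVR
  rw [← star_eq_adjoint]
  refine subset_antisymm (fun x ⟨⟨hx, hxL⟩, hxR⟩ Y hY => ?_)
    (hVL.centralizer_centralizer_even_subset hΓ hΓ2)
  exact (hVL.commute_of_mem_centralizer_centralizer hΓ hΓ2 hPΓ hQΓ hPQ hx (hxL VL rfl)
    (hxR _ rfl) hY).eq
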